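/- arXiv:2405.16333 — 2 statements merged into one kernel-verified Lean document; each statement's English description precedes it below -/
import Mathlib

section
/- Let U, D be given by the Tian tree formulas U = (r_n v_n/2)(v_n + 1 + √(v_n² + 2v_n - 3)) and D = (r_n v_n/2)(v_n + 1 - √(v_n² + 2v_n - 3)), where r_n = e^{rΔt}, v_n = e^{σ²Δt}, and p = (e^{rΔt} - D)/(U - D). Then pU + (1-p)D = e^{rΔt}, pU² + (1-p)D² = e^{(2r+σ²)Δt}, and pU³ + (1-p)D³ = e^{(3r+3σ²)Δt}. -/
theorem tian_moment_matching (r σ Δt : ℝ) (hΔt : 0 < Δt) (hσ : 0 < σ)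
    (rn vn U D p : ℝ)
    (hrn : rn = Real.exp (r * Δt)) (hvn : vn = Real.exp (σ ^ 2 * Δt))
    (hU : U = (1/2) * rn * vn * (vn + 1 + Real.sqrt (vn ^ 2 + 2 * vn - 3)))
    (hD : D = (1/2) * rn * vn * (vn + 1 - Real.sqrt (vn ^ 2 + 2 * vn - 3)))
    (hp : p = (Real.exp (r * Δt) - D) / (U - D)) :
    p * U + (1 - p) * D = Real.exp (r * Δt) ∧
    p * U ^ 2 + (1 - p) * D ^ 2 = Real.exp ((2 * r + σ ^ 2) * Δt) ∧
    p * U ^ 3 + (1 - p) * D ^ 3 = Real.exp ((3 * r + 3 * σ ^ 2) * Δt) := by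
  have hvn1 : 1 < vn := by
    rw [hvn]
    have : Real.exp 0 < Real.exp (σ ^ 2 * Δt) := Real.exp_lt_exp.mpr (by positivity)
    simpa using this
  have hrnpos : 0 < rn := by rw [hrn]; exact Real.exp_pos _
  set s := Real.sqrt (vn ^ 2 + 2 * vn - 3) with hsdef
  have hsnn : (0:ℝ) ≤ vn ^ 2 + 2 * vn - 3 := by nlinarith
  have hs2 : s ^ 2 = vn ^ 2 + 2 * vn - 3 := Real.sq_sqrt hsnn
  have hspos : 0 < s := Real.sqrt_pos.mpr (by nlinarith)
  subst hU hD
  have hUD : (1/2) * rn * vn * (vn + 1 + s) - (1/2) * rn * vn * (vn + 1 - s)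
      = rn * vn * s := by ring
  have hne : (1/2) * rn * vn * (vn + 1 + s) - (1/2) * rn * vn * (vn + 1 - s) ≠ 0 := by
    rw [hUD]; positivity
  have hrn' : Real.exp (r * Δt) = rn := hrn.symm
  have h1 : p * (rn * vn * s) = rn - (1/2) * rn * vn * (vn + 1 - s) := by
    rw [hp, hrn', ← hUD]
    exact div_mul_cancel₀ _ hne
  have e2 : Real.exp ((2 * r + σ ^ 2) * Δt) = rn ^ 2 * vn := by
    rw [show (2 * r + σ ^ 2) * Δt = r * Δt + (r * Δt + σ ^ 2 * Δt) by ring,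
      Real.exp_add, Real.exp_add, hrn, hvn]; ring
  have e3 : Real.exp ((3 * r + 3 * σ ^ 2) * Δt) = rn ^ 3 * vn ^ 3 := by
    rw [show (3 * r + 3 * σ ^ 2) * Δt
        = r * Δt + (r * Δt + (r * Δt + (σ ^ 2 * Δt + (σ ^ 2 * Δt + σ ^ 2 * Δt)))) by ring,
      Real.exp_add, Real.exp_add, Real.exp_add, Real.exp_add, Real.exp_add, hrn, hvn]; ring
  rw [hrn', e2, e3]
  refine ⟨by linear_combination h1, ?_, ?_⟩
  · linear_combination (rn * vn * (vn + 1)) * h1 + (rn ^ 2 * vn ^ 2 / 4) * hs2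
  · linear_combination (rn ^ 2 * vn ^ 2 / 4 * (3 * (vn + 1) ^ 2 + s ^ 2)) * h1
      + (rn ^ 3 * vn ^ 2 / 4 * (1 + vn + vn ^ 2)) * hs2
end

section
/- The number of distinct terminal states of the Markov tree after n ≥ 1 steps is n² - n + 2. -/
/-- Exponent vector `(a, b, c, e, f, g)` of the monomial `u^a d^b v^c w^e x^f y^g`
attained by the Markov-tree path `π : Fin n → Bool` (`true` = up-move).  The first step
contributes `u` or `d`; a later step contributes `v`/`w` after an up-move and `x`/`y`
after a down-move.  Since `u,d,v,w,x,y` are assumed algebraically independent, distinct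
terminal states correspond exactly to distinct exponent vectors. -/
def markovState (n : ℕ) (π : Fin n → Bool) : ℕ × ℕ × ℕ × ℕ × ℕ × ℕ :=
  ((Finset.univ.filter fun i : Fin n => i.val = 0 ∧ π i = true).card,
   (Finset.univ.filter fun i : Fin n => i.val = 0 ∧ π i = false).card,
   (Finset.univ.filter fun i : Fin n => 1 ≤ i.val ∧
      π ⟨i.val - 1, Nat.lt_of_le_of_lt (Nat.sub_le _ _) i.isLt⟩ = true ∧ π i = true).card,
   (Finset.univ.filter fun i : Fin n => 1 ≤ i.val ∧
      π ⟨i.val - 1, Nat.lt_of_le_of_lt (Nat.sub_le _ _) i.isLt⟩ = true ∧ π i = false).card,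
   (Finset.univ.filter fun i : Fin n => 1 ≤ i.val ∧
      π ⟨i.val - 1, Nat.lt_of_le_of_lt (Nat.sub_le _ _) i.isLt⟩ = false ∧ π i = true).card,
   (Finset.univ.filter fun i : Fin n => 1 ≤ i.val ∧
      π ⟨i.val - 1, Nat.lt_of_le_of_lt (Nat.sub_le _ _) i.isLt⟩ = false ∧ π i = false).card)

lemma MT.card_zero_snoc (n : ℕ) (π : Fin (n+1) → Bool) (b r : Bool) :
    (Finset.univ.filter fun i : Fin (n+2) => i.val = 0 ∧ @Fin.snoc (n+1) (fun _ => Bool) π b i = r).card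
      = (Finset.univ.filter fun i : Fin (n+1) => i.val = 0 ∧ π i = r).card := by
  rw [Finset.card_filter, Finset.card_filter, Fin.sum_univ_castSucc]
  have hlast : ((if (Fin.last (n+1)).val = 0 ∧ @Fin.snoc (n+1) (fun _ => Bool) π b (Fin.last (n+1)) = r then 1 else 0) : ℕ) = 0 := by
    simp [Fin.last]
  rw [hlast, add_zero]
  apply Finset.sum_congr rfl
  intro i _
  simp [Fin.snoc_castSucc]

lemma MT.card_pair_snoc (n : ℕ) (π : Fin (n+1) → Bool) (b q r : Bool) :
    (Finset.univ.filter fun i : Fin (n+2) => 1 ≤ i.val ∧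
        @Fin.snoc (n+1) (fun _ => Bool) π b ⟨i.val - 1, Nat.lt_of_le_of_lt (Nat.sub_le _ _) i.isLt⟩ = q ∧
        @Fin.snoc (n+1) (fun _ => Bool) π b i = r).card
      = (Finset.univ.filter fun i : Fin (n+1) => 1 ≤ i.val ∧
          π ⟨i.val - 1, Nat.lt_of_le_of_lt (Nat.sub_le _ _) i.isLt⟩ = q ∧ π i = r).card
        + (if π (Fin.last n) = q ∧ b = r then 1 else 0) := by
  rw [Finset.card_filter, Finset.card_filter, Fin.sum_univ_castSucc]
  congr 1
  · apply Finset.sum_congr rfl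
    intro i _
    have h1 : @Fin.snoc (n+1) (fun _ => Bool) π b (Fin.castSucc i) = π i := Fin.snoc_castSucc ..
    have h2 : @Fin.snoc (n+1) (fun _ => Bool) π b ⟨(Fin.castSucc i).val - 1,
        Nat.lt_of_le_of_lt (Nat.sub_le _ _) (Fin.castSucc i).isLt⟩
        = π ⟨i.val - 1, Nat.lt_of_le_of_lt (Nat.sub_le _ _) i.isLt⟩ := by
      have e : (⟨(Fin.castSucc i).val - 1,
          Nat.lt_of_le_of_lt (Nat.sub_le _ _) (Fin.castSucc i).isLt⟩ : Fin (n+2))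
          = Fin.castSucc ⟨i.val - 1, Nat.lt_of_le_of_lt (Nat.sub_le _ _) i.isLt⟩ := rfl
      rw [e, Fin.snoc_castSucc]
    rw [h1, h2]
    rfl
  · have h3 : @Fin.snoc (n+1) (fun _ => Bool) π b (Fin.last (n+1)) = b := Fin.snoc_last ..
    have h4 : @Fin.snoc (n+1) (fun _ => Bool) π b ⟨(Fin.last (n+1)).val - 1,
        Nat.lt_of_le_of_lt (Nat.sub_le _ _) (Fin.last (n+1)).isLt⟩ = π (Fin.last n) := by
      have e : (⟨(Fin.last (n+1)).val - 1,
          Nat.lt_of_le_of_lt (Nat.sub_le _ _) (Fin.last (n+1)).isLt⟩ : Fin (n+2))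
          = Fin.castSucc (Fin.last n) := rfl
      rw [e, Fin.snoc_castSucc]
    rw [h3, h4]
    simp [Fin.last]

lemma MT.state_snoc (n : ℕ) (π : Fin (n+1) → Bool) (b : Bool) :
    markovState (n+2) (Fin.snoc π b) =
      ((markovState (n+1) π).1, (markovState (n+1) π).2.1,
       (markovState (n+1) π).2.2.1 + (if π (Fin.last n) = true ∧ b = true then 1 else 0),
       (markovState (n+1) π).2.2.2.1 + (if π (Fin.last n) = true ∧ b = false then 1 else 0),
       (markovState (n+1) π).2.2.2.2.1 + (if π (Fin.last n) = false ∧ b = true then 1 else 0),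
       (markovState (n+1) π).2.2.2.2.2 + (if π (Fin.last n) = false ∧ b = false then 1 else 0)) := by
  unfold markovState
  rw [MT.card_zero_snoc, MT.card_zero_snoc, MT.card_pair_snoc, MT.card_pair_snoc,
    MT.card_pair_snoc, MT.card_pair_snoc]

def MT.Emap (n : ℕ) (p : Bool × ℕ × ℕ) : ℕ × ℕ × ℕ × ℕ × ℕ × ℕ :=
  (cond p.1 1 0, cond p.1 0 1, p.2.2,
   if p.1 then p.2.1 / 2 else (p.2.1 - 1) / 2,
   if p.1 then (p.2.1 - 1) / 2 else p.2.1 / 2,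
   n - p.2.1 - p.2.2)

lemma MT.state_one (π : Fin 1 → Bool) :
    markovState 1 π = MT.Emap 1 (π 0, 1, 0) := by
  cases h : π 0 <;>
    simp [markovState, MT.Emap, Finset.univ_unique, Finset.filter_singleton, h,
      show (default : Fin 1) = 0 from rfl]

def MT.tlast (s : Bool) (k : ℕ) : Bool := if k % 2 = 1 then s else !s

lemma MT.snoc_same (n : ℕ) (π : Fin (n+1) → Bool) (s : Bool) (k c : ℕ)
    (hst : markovState (n+1) π = MT.Emap (n+1) (s, k, c))
    (hlast : π (Fin.last n) = MT.tlast s k) (hk : 1 ≤ k) (hkc : k + c ≤ n + 1) :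
    markovState (n+2) (Fin.snoc π (MT.tlast s k)) =
      MT.Emap (n+2) (s, k, c + (if MT.tlast s k then 1 else 0)) := by
  rw [MT.state_snoc, hst, hlast]
  rcases s <;> rcases Nat.mod_two_eq_zero_or_one k with h | h <;>
    simp [MT.Emap, MT.tlast, h, Prod.ext_iff] <;> omega

lemma MT.snoc_flip (n : ℕ) (π : Fin (n+1) → Bool) (s : Bool) (k c : ℕ)
    (hst : markovState (n+1) π = MT.Emap (n+1) (s, k, c))
    (hlast : π (Fin.last n) = MT.tlast s k) (hk : 1 ≤ k) (hkc : k + c ≤ n + 1) :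
    markovState (n+2) (Fin.snoc π (!MT.tlast s k)) =
      MT.Emap (n+2) (s, k + 1, c) := by
  rw [MT.state_snoc, hst, hlast]
  rcases s <;> rcases Nat.mod_two_eq_zero_or_one k with h | h <;>
    simp [MT.Emap, MT.tlast, h, Prod.ext_iff] <;> omega

lemma MT.tlast_succ (s : Bool) (k : ℕ) : MT.tlast s (k+1) = !(MT.tlast s k) := by
  rcases Nat.mod_two_eq_zero_or_one k with h | h
  · have h2 : (k+1) % 2 = 1 := by omega
    simp [MT.tlast, h, h2]
  · have h2 : (k+1) % 2 ≠ 1 := by omega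
    simp [MT.tlast, h, h2]

lemma MT.init_zero {n : ℕ} (π : Fin (n+2) → Bool) : Fin.init π 0 = π 0 := by
  simp [Fin.init]

lemma MT.forward : ∀ n : ℕ, ∀ π : Fin (n+1) → Bool, ∃ s k c,
    1 ≤ k ∧ k + c ≤ n + 1 ∧ (k = 1 → c = if s then n else 0) ∧
    π 0 = s ∧ π (Fin.last n) = MT.tlast s k ∧
    markovState (n+1) π = MT.Emap (n+1) (s, k, c) := by
  intro n
  induction n with
  | zero =>
    intro π
    refine ⟨π 0, 1, 0, le_refl 1, by omega, by simp, rfl, ?_, MT.state_one π⟩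
    have : Fin.last 0 = 0 := rfl
    rw [this, MT.tlast]
    simp
  | succ n ih =>
    intro π
    obtain ⟨s, k, c, h1, h2, h3, h4, h5, h6⟩ := ih (Fin.init π)
    set b := π (Fin.last (n+1)) with hbdef
    have hsn : Fin.snoc (Fin.init π) b = π := Fin.snoc_init_self π
    by_cases hb : b = MT.tlast s k
    · refine ⟨s, k, c + (if MT.tlast s k then 1 else 0), h1, ?_, ?_, ?_, ?_, ?_⟩
      · by_cases ht : MT.tlast s k = true <;> simp [ht] <;> omega
      · intro hk1
        subst hk1
        have hts : MT.tlast s 1 = s := by simp [MT.tlast]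
        rcases s
        · simpa [hts] using h3 rfl
        · simp [hts, h3 rfl]
      · rw [← MT.init_zero π, h4]
      · exact hb
      · rw [← hsn, hb]
        exact MT.snoc_same n (Fin.init π) s k c h6 h5 h1 h2
    · have hb' : b = !MT.tlast s k := by
        revert hb; cases b <;> cases (MT.tlast s k) <;> simp
      refine ⟨s, k + 1, c, by omega, by omega, by omega, ?_, ?_, ?_⟩
      · rw [← MT.init_zero π, h4]
      · rw [hb', MT.tlast_succ]
      · rw [← hsn, hb']
        exact MT.snoc_flip n (Fin.init π) s k c h6 h5 h1 h2

lemma MT.snoc_zero {n : ℕ} (π : Fin (n+1) → Bool) (x : Bool) :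
    @Fin.snoc (n+1) (fun _ => Bool) π x 0 = π 0 := by
  have h : (0 : Fin (n+2)) = Fin.castSucc 0 := rfl
  rw [h, Fin.snoc_castSucc]

lemma MT.backward : ∀ n : ℕ, ∀ s : Bool, ∀ k c : ℕ,
    1 ≤ k → k + c ≤ n + 1 → (k = 1 → c = if s then n else 0) →
    ∃ π : Fin (n+1) → Bool, π 0 = s ∧ π (Fin.last n) = MT.tlast s k ∧
      markovState (n+1) π = MT.Emap (n+1) (s, k, c) := by
  intro n
  induction n with
  | zero =>
    intro s k c hk hkc h3
    have hk1 : k = 1 := by omega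
    subst hk1
    have hc : c = 0 := by omega
    subst hc
    exact ⟨fun _ => s, rfl, by simp [MT.tlast], MT.state_one _⟩
  | succ n ih =>
    intro s k c hk hkc h3
    by_cases hroute : (MT.tlast s k = true ∧ 1 ≤ c) ∨ (MT.tlast s k = false ∧ k + c ≤ n + 1)
    · -- append same letter
      set c' := if MT.tlast s k then c - 1 else c with hc'
      have hv1 : k + c' ≤ n + 1 := by
        rcases hroute with ⟨ht, hc1⟩ | ⟨ht, hle⟩ <;> simp [hc', ht] <;> omega
      have hv2 : k = 1 → c' = if s then n else 0 := by
        intro hk1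
        have hts : MT.tlast s 1 = s := by simp [MT.tlast]
        subst hk1
        have hcv := h3 rfl
        rcases s <;> simp_all [hc']
      obtain ⟨π', hz, hl, hst⟩ := ih s k c' hk hv1 hv2
      refine ⟨Fin.snoc π' (MT.tlast s k), ?_, ?_, ?_⟩
      · rw [MT.snoc_zero, hz]
      · rw [Fin.snoc_last]
      · rw [MT.snoc_same n π' s k c' hst hl hk hv1]
        have : c' + (if MT.tlast s k then 1 else 0) = c := by
          rcases hroute with ⟨ht, hc1⟩ | ⟨ht, hle⟩ <;> simp [hc', ht] <;> omega
        rw [this]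
    · -- append flipped letter
      have hk2 : 2 ≤ k := by
        rcases Nat.lt_or_ge k 2 with h | h
        · exfalso
          have hk1 : k = 1 := by omega
          subst hk1
          have hcv := h3 rfl
          have hts : MT.tlast s 1 = s := by simp [MT.tlast]
          rcases s <;> simp_all <;> omega
        · exact h
      obtain ⟨k', rfl⟩ : ∃ k', k = k' + 1 := ⟨k - 1, by omega⟩
      have hv1 : 1 ≤ k' := by omega
      have hv2 : k' + c ≤ n + 1 := by omega
      have hv3 : k' = 1 → c = if s then n else 0 := by
        intro hk1
        subst hk1
        have ht2 : MT.tlast s 2 = !s := by simp [MT.tlast]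
        rcases s
        · simp only [Bool.not_false] at ht2
          simp only [ht2, true_and, Bool.true_eq_false, false_and, or_false, not_and, not_le] at hroute
          simp; omega
        · simp only [Bool.not_true] at ht2
          simp only [ht2, Bool.false_eq_true, false_and, true_and, false_or, not_and, not_le] at hroute
          simp; omega
      obtain ⟨π', hz, hl, hst⟩ := ih s k' c hv1 hv2 hv3
      refine ⟨Fin.snoc π' (!MT.tlast s k'), ?_, ?_, ?_⟩
      · rw [MT.snoc_zero, hz]
      · rw [Fin.snoc_last, MT.tlast_succ]
      · exact MT.snoc_flip n π' s k' c hst hl hv1 hv2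

def MT.Pset (n : ℕ) : Finset (Bool × ℕ × ℕ) :=
  (Finset.univ ×ˢ Finset.range (n+1) ×ˢ Finset.range (n+1)).filter
    fun p => 1 ≤ p.2.1 ∧ p.2.1 + p.2.2 ≤ n ∧ (p.2.1 = 1 → p.2.2 = if p.1 then n - 1 else 0)

lemma MT.injOn (n : ℕ) : Set.InjOn (MT.Emap n) (MT.Pset n) := by
  rintro ⟨s1, k1, c1⟩ hp ⟨s2, k2, c2⟩ hq h
  simp only [MT.Pset, Finset.coe_filter, Set.mem_setOf_eq] at hp hq
  obtain ⟨-, hk1, -⟩ := hp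
  obtain ⟨-, hk2, -⟩ := hq
  simp only [MT.Emap, Prod.mk.injEq] at h
  obtain ⟨ha, hb, hc, he, hf, hg⟩ := h
  have hs : s1 = s2 := by rcases s1 <;> rcases s2 <;> simp_all
  subst hs
  subst hc
  have hk : k1 = k2 := by rcases s1 <;> simp_all <;> omega
  subst hk
  rfl

lemma MT.gaussrev (m : ℕ) : ∑ i ∈ Finset.range m, (m - i) = ∑ i ∈ Finset.range (m+1), i := by
  rw [Finset.sum_range_succ']
  have h := Finset.sum_range_reflect (fun j => j + 1) m
  simp only [add_zero]
  rw [← h]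
  apply Finset.sum_congr rfl
  intro i hi
  rw [Finset.mem_range] at hi
  omega

lemma MT.card_Pset {n : ℕ} (hn : 1 ≤ n) : (MT.Pset n).card = n ^ 2 - n + 2 := by
  obtain ⟨m, rfl⟩ : ∃ m, n = m + 1 := ⟨n - 1, by omega⟩
  rw [MT.Pset, Finset.card_filter]
  simp only [Finset.sum_product]
  have key : ∀ s : Bool, (∑ k ∈ Finset.range (m+1+1), ∑ c ∈ Finset.range (m+1+1),
      if 1 ≤ (s, k, c).2.1 ∧ (s, k, c).2.1 + (s, k, c).2.2 ≤ m+1 ∧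
        ((s, k, c).2.1 = 1 → (s, k, c).2.2 = if (s, k, c).1 then m+1-1 else 0) then 1 else 0)
      = 1 + ∑ i ∈ Finset.range (m+1), i := by
    intro s
    have hin : ∀ k, (∑ c ∈ Finset.range (m+2),
        if 1 ≤ k ∧ k + c ≤ m+1 ∧ (k = 1 → c = if s then m else 0) then 1 else 0)
        = if k = 0 then 0 else if k = 1 then 1 else (m+2) - k := by
      intro k
      rw [← Finset.card_filter]
      rcases Nat.lt_or_ge k 2 with hk | hk
      · interval_cases k
        · simp
        · obtain ⟨v, hvdef⟩ : ∃ v, (if s = true then m else 0) = v := ⟨_, rfl⟩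
          have hv : v ≤ m := by cases s <;> simp at hvdef <;> omega
          have hfilt : (Finset.range (m+2)).filter
              (fun c => 1 ≤ 1 ∧ 1 + c ≤ m+1 ∧ (1 = 1 → c = if s = true then m else 0))
              = {v} := by
            ext c
            rw [Finset.mem_filter, Finset.mem_singleton, Finset.mem_range]
            constructor
            · rintro ⟨-, -, -, h⟩; rw [h rfl, hvdef]
            · rintro rfl
              exact ⟨by omega, le_rfl, by omega, fun _ => hvdef.symm⟩
          rw [hfilt, Finset.card_singleton]
          norm_num
      · have : (Finset.range (m+2)).filter
            (fun c => 1 ≤ k ∧ k + c ≤ m+1 ∧ (k = 1 → c = if s then m else 0))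
            = Finset.range (m+2-k) := by
          ext c
          simp only [Finset.mem_filter, Finset.mem_range]
          constructor
          · rintro ⟨-, -, h, -⟩; omega
          · intro h; exact ⟨by omega, by omega, by omega, fun h1 => by omega⟩
        rw [this, Finset.card_range]
        have h0 : k ≠ 0 := by omega
        have h1 : k ≠ 1 := by omega
        simp [h0, h1]
    calc (∑ k ∈ Finset.range (m+1+1), ∑ c ∈ Finset.range (m+1+1),
        if 1 ≤ (s, k, c).2.1 ∧ (s, k, c).2.1 + (s, k, c).2.2 ≤ m+1 ∧
          ((s, k, c).2.1 = 1 → (s, k, c).2.2 = if (s, k, c).1 then m+1-1 else 0) then 1 else 0)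
        = ∑ k ∈ Finset.range (m+2),
            (if k = 0 then 0 else if k = 1 then 1 else (m+2) - k) := by
          apply Finset.sum_congr rfl
          intro k _
          exact hin k
      _ = 1 + ∑ i ∈ Finset.range (m+1), i := by
          rw [Finset.sum_range_succ', Finset.sum_range_succ']
          have : ∀ i ∈ Finset.range m, (if i+1+1 = 0 then 0 else if i+1+1 = 1 then 1
              else (m+2) - (i+1+1)) = m - i := by
            intro i _
            rw [if_neg (by omega), if_neg (by omega)]
            omega
          rw [Finset.sum_congr rfl this, MT.gaussrev]
          norm_num
          omega
  rw [Fintype.sum_bool, key true, key false]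
  have hG := Finset.sum_range_id_mul_two (m+1)
  have h2 : (m+1)^2 = (m+1)*m + (m+1) := by ring
  rw [h2]
  have h3 : ((m+1)*m + (m+1)) - (m+1) + 2 = (m+1)*m + 2 := by
    rw [Nat.add_sub_cancel]
  rw [h3]
  simp only [Nat.add_sub_cancel] at hG ⊢
  linarith

lemma MT.mem_Pset {n : ℕ} (hn : 1 ≤ n) {s : Bool} {k c : ℕ} :
    (s, k, c) ∈ MT.Pset n ↔ 1 ≤ k ∧ k + c ≤ n ∧ (k = 1 → c = if s then n - 1 else 0) := by
  simp only [MT.Pset, Finset.mem_filter, Finset.mem_product, Finset.mem_univ, Finset.mem_range,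
    true_and]
  constructor
  · rintro ⟨-, h⟩; exact h
  · rintro ⟨h1, h2, h3⟩; exact ⟨⟨by omega, by omega⟩, h1, h2, h3⟩

theorem markov_tree_state_count (n : ℕ) (hn : 1 ≤ n) :
    (Finset.univ.image (markovState n)).card = n ^ 2 - n + 2 := by
  obtain ⟨m, rfl⟩ : ∃ m, n = m + 1 := ⟨n - 1, by omega⟩
  have himg : Finset.univ.image (markovState (m+1)) = (MT.Pset (m+1)).image (MT.Emap (m+1)) := by
    apply Finset.Subset.antisymm
    · intro x hx
      simp only [Finset.mem_image] at hx ⊢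
      obtain ⟨π, -, rfl⟩ := hx
      obtain ⟨s, k, c, h1, h2, h3, -, -, h6⟩ := MT.forward m π
      exact ⟨(s, k, c), (MT.mem_Pset (by omega)).mpr ⟨h1, by omega, by simpa using h3⟩, h6.symm⟩
    · intro x hx
      simp only [Finset.mem_image] at hx ⊢
      obtain ⟨⟨s, k, c⟩, hp, rfl⟩ := hx
      rw [MT.mem_Pset (by omega)] at hp
      obtain ⟨π, -, -, hπ⟩ := MT.backward m s k c hp.1 (by omega) (by simpa using hp.2.2)
      exact ⟨π, Finset.mem_univ _, hπ⟩
  rw [himg, Finset.card_image_of_injOn (MT.injOn (m+1)), MT.card_Pset (by omega)]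
end
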